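/- arXiv:2604.13740 — 7 statements merged into one kernel-verified Lean document; each statement's English description precedes it below -/
import Mathlib

section
/- If a ≥ 0, b ≥ 0, and a + b ≥ B > A > 0, then a/(a+b-A) ≤ a/(a+b) + A/(B-A). -/
theorem stmt_0 (a b A B : ℝ) (ha : 0 ≤ a) (hb : 0 ≤ b)
    (hA : 0 < A) (hAB : A < B) (hab : B ≤ a + b) :
    a / (a + b - A) ≤ a / (a + b) + A / (B - A) := by
  have hs : 0 < a + b := lt_of_lt_of_le (hA.trans hAB) hab
  have hsA : 0 < a + b - A := by linarith
  have hBA : 0 < B - A := by linarith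
  have key : a / (a + b - A) = a / (a + b) + a * A / ((a + b) * (a + b - A)) := by
    field_simp
    ring
  rw [key]
  gcongr a / (a + b) + ?_
  calc a * A / ((a + b) * (a + b - A)) ≤ (a + b) * A / ((a + b) * (a + b - A)) := by
        gcongr <;> linarith
    _ = A / (a + b - A) := by
        rw [mul_div_mul_left _ _ hs.ne']
    _ ≤ A / (B - A) := by gcongr <;> linarith
end

section
/- Under the same setup (ℓ ∈ [0,1], s_j ∈ [0,1], probability vector (p_j), γ > 0, zero-mean noise ξ with |ξ| ≤ R, J ~ p independent of ξ), the second moment satisfies E[ℓ̂²] ≤ (1+R²)/(Σ_j p_j s_j² + γ), where ℓ̂ = s_J·(s_J·ℓ + (1-s_J)·ξ)/(Σ_j p_j s_j² + γ). -/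
/-!
The inner factor `s ℓ + (1 - s) ξ` is a convex combination of `ℓ` and `ξ`, so its square is at most
`s ℓ² + (1 - s) ξ² ≤ 1 + R²`. Hence `ℓ̂² ≤ (1 + R²) s_J² / D²` with `D = ∑ⱼ pⱼ sⱼ² + γ`, and taking
expectations, `E[s_J²] = ∑ⱼ pⱼ sⱼ² ≤ D`.
-/

open MeasureTheory ProbabilityTheory

lemma sq_convexComb_le_one_add_sq {s x y R : ℝ} (hs : s ∈ Set.Icc (0 : ℝ) 1) (hx : |x| ≤ 1)
    (hy : |y| ≤ R) : (s * x + (1 - s) * y) ^ 2 ≤ 1 + R ^ 2 := by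
  obtain ⟨hs0, hs1⟩ := hs
  have hx2 : x ^ 2 ≤ 1 := by simpa using sq_le_sq' (abs_le.1 hx).1 (abs_le.1 hx).2
  have hy2 : y ^ 2 ≤ R ^ 2 := sq_le_sq' (abs_le.1 hy).1 (abs_le.1 hy).2
  have hconvex : (s * x + (1 - s) * y) ^ 2 ≤ s * x ^ 2 + (1 - s) * y ^ 2 := by
    nlinarith [mul_nonneg (mul_nonneg hs0 (sub_nonneg.2 hs1)) (sq_nonneg (x - y))]
  nlinarith [sq_nonneg y, sq_nonneg R]

section FiniteValued

variable {Ω ι E : Type*} [MeasurableSpace Ω] {μ : Measure Ω} [IsFiniteMeasure μ]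
  [Fintype ι] [MeasurableSpace ι] [MeasurableSingletonClass ι] {J : Ω → ι}
  [NormedAddCommGroup E]

lemma integrable_comp_of_fintype (hJ : Measurable J) (f : ι → E) :
    Integrable (fun ω ↦ f (J ω)) μ :=
  Integrable.of_finite.comp_measurable hJ

lemma integral_comp_of_fintype [NormedSpace ℝ E] [CompleteSpace E] (hJ : Measurable J) (f : ι → E) :
    ∫ ω, f (J ω) ∂μ = ∑ j, μ.real (J ⁻¹' {j}) • f j := by
  rw [← integral_map hJ.aemeasurable Integrable.of_finite.aestronglyMeasurable,
    integral_fintype Integrable.of_finite]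
  simp only [map_measureReal_apply hJ (measurableSet_singleton _)]

end FiniteValued

theorem stmt_9_general {Ω : Type*} [MeasurableSpace Ω] (μ : Measure Ω)
    [IsProbabilityMeasure μ]
    (N : ℕ) (p : Fin N → ℝ) (sc : Fin N → ℝ) (ℓ γ R : ℝ)
    (hℓ : ℓ ∈ Set.Icc (0 : ℝ) 1)
    (hp : ∀ j, 0 ≤ p j)
    (hsc : ∀ j, sc j ∈ Set.Icc (0 : ℝ) 1)
    (hγ : 0 < γ)
    (ξ : Ω → ℝ) (J : Ω → Fin N)
    (hJmeas : Measurable J)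
    (hξbound : ∀ ω, |ξ ω| ≤ R)
    (hJdist : ∀ j, (μ {ω | J ω = j}).toReal = p j) :
    ∫ ω, (sc (J ω) * (sc (J ω) * ℓ + (1 - sc (J ω)) * ξ ω) /
        (∑ j, p j * (sc j) ^ 2 + γ)) ^ 2 ∂μ ≤
      (1 + R ^ 2) / (∑ j, p j * (sc j) ^ 2 + γ) := by
  set D := ∑ j, p j * (sc j) ^ 2 + γ
  have hS : 0 ≤ ∑ j, p j * (sc j) ^ 2 := Finset.sum_nonneg fun j _ ↦ mul_nonneg (hp j) (sq_nonneg _)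
  have hD : 0 < D := by positivity
  have hℓ1 : |ℓ| ≤ 1 := abs_le.2 ⟨by linarith [hℓ.1], hℓ.2⟩
  have hpointwise : ∀ ω, (sc (J ω) * (sc (J ω) * ℓ + (1 - sc (J ω)) * ξ ω) / D) ^ 2 ≤
      (1 + R ^ 2) / D ^ 2 * sc (J ω) ^ 2 := fun ω ↦ by
    rw [div_pow, mul_pow, div_mul_eq_mul_div, mul_comm (1 + R ^ 2)]
    gcongr
    exact sq_convexComb_le_one_add_sq (hsc (J ω)) hℓ1 (hξbound ω)
  have hmoment : ∫ ω, sc (J ω) ^ 2 ∂μ = ∑ j, p j * sc j ^ 2 := by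
    rw [integral_comp_of_fintype hJmeas fun j ↦ sc j ^ 2]
    exact Finset.sum_congr rfl fun j _ ↦ by rw [smul_eq_mul, measureReal_def, ← hJdist j]; rfl
  calc _ ≤ ∫ ω, (1 + R ^ 2) / D ^ 2 * sc (J ω) ^ 2 ∂μ :=
        integral_mono_of_nonneg (ae_of_all _ fun _ ↦ sq_nonneg _)
          ((integrable_comp_of_fintype hJmeas fun j ↦ sc j ^ 2).const_mul _) (ae_of_all _ hpointwise)
    _ = (1 + R ^ 2) / D ^ 2 * ∑ j, p j * sc j ^ 2 := by rw [integral_const_mul, hmoment]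
    _ ≤ (1 + R ^ 2) / D ^ 2 * D := by gcongr; linarith
    _ = (1 + R ^ 2) / D := by field_simp

theorem stmt_9 {Ω : Type*} [MeasurableSpace Ω] (μ : Measure Ω)
    [IsProbabilityMeasure μ]
    (N : ℕ) (p : Fin N → ℝ) (sc : Fin N → ℝ) (ℓ γ R : ℝ)
    (hℓ : ℓ ∈ Set.Icc (0 : ℝ) 1)
    (hp : ∀ j, 0 ≤ p j) (hpsum : ∑ j, p j = 1)
    (hsc : ∀ j, sc j ∈ Set.Icc (0 : ℝ) 1)
    (hγ : 0 < γ)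
    (ξ : Ω → ℝ) (J : Ω → Fin N)
    (hξmeas : Measurable ξ) (hJmeas : Measurable J)
    (hR : 0 ≤ R) (hξbound : ∀ ω, |ξ ω| ≤ R)
    (hξmean : ∫ ω, ξ ω ∂μ = 0)
    (hJdist : ∀ j, (μ {ω | J ω = j}).toReal = p j)
    (hindep : IndepFun J ξ μ) :
    ∫ ω, (sc (J ω) * (sc (J ω) * ℓ + (1 - sc (J ω)) * ξ ω) /
        (∑ j, p j * (sc j) ^ 2 + γ)) ^ 2 ∂μ ≤
      (1 + R ^ 2) / (∑ j, p j * (sc j) ^ 2 + γ) :=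
  stmt_9_general μ N p sc ℓ γ R hℓ hp hsc hγ ξ J hJmeas hξbound hJdist
end

section
/- Let G be a directed graph on vertices {1,…,N} with independence number α. For each vertex i let d_i⁻ denote its in-degree. Then Σ_{i=1}^N 1/(1 + d_i⁻) ≤ 2α·log(1 + N/α). -/
/-!
Let `α` be the independence number of the undirected graph underlying `G`. Its complement has
no `(α + 1)`-clique, so Turán's theorem shows that any `n` vertices span at least
`n (n - α) / (2α)` edges; each edge is an arc, hence counts towards an in-degree. Sorting the
vertices by increasing in-degree `d₁ ≤ … ≤ d_N`, the first `j` of them thus have in-degree sum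
at least `j (j - α) / (2α)` and at most `j dⱼ`, so `1 / (1 + dⱼ) ≤ 2α / (α + j)`. Summing and
comparing with `∫ dx / x` over `[α, α + N]` gives `2α log (1 + N / α)`.
-/

open Classical in
/-- In-degree of vertex `i` in the directed graph `adj`. -/
noncomputable def indegree (N : ℕ) (adj : Fin N → Fin N → Prop) (i : Fin N) : ℕ :=
  (Finset.univ.filter (fun j => adj j i)).card

open Classical in
/-- Independence number of a directed graph: the largest set of vertices with no
arc (in either direction) between any two distinct vertices of the set. -/
noncomputable def indepNumD (N : ℕ) (adj : Fin N → Fin N → Prop) : ℕ :=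
  (Finset.univ.powerset.filter
    (fun S : Finset (Fin N) =>
      ∀ i ∈ S, ∀ j ∈ S, i ≠ j → ¬ adj i j ∧ ¬ adj j i)).sup Finset.card

open Finset Fintype

namespace SimpleGraph

variable {V : Type*} [Fintype V]

theorem sq_card_le_mul_card_add_sum_degree {G : SimpleGraph V} [DecidableRel G.Adj] {a : ℕ}
    (h : ∀ s : Finset V, G.IsIndepSet s → #s ≤ a) :
    card V ^ 2 ≤ a * (card V + ∑ v, G.degree v) := by
  classical
  have hfree : Gᶜ.CliqueFree (a + 1) := fun s hs => by
    have hs' := G.isNClique_compl.mp hs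
    have := h s hs'.isIndepSet
    rw [hs'.card_eq] at this
    omega
  rcases a.eq_zero_or_pos with rfl | ha
  · have := cliqueFree_one.mp hfree
    simp
  have hturan : (∑ v, Gᶜ.degree v) * a ≤ (a - 1) * card V ^ 2 := by
    have hle := hfree.card_edgeFinset_le
    dsimp only at hle
    rw [← card_edgeFinset_turanGraph] at hle
    rw [sum_degrees_eq_twice_card_edges]
    grw [← mul_card_edgeFinset_turanGraph_le, hle]
    apply le_of_eq; ring
  have hsum : ∑ v, Gᶜ.degree v + ∑ v, G.degree v = card V * (card V - 1) := by
    rw [← sum_add_distrib, ← card_univ, ← smul_eq_mul, ← sum_const]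
    refine sum_congr rfl fun v _ => ?_
    have := G.degree_lt_card_verts v
    rw [degree_compl, card_univ]
    omega
  generalize ∑ v, Gᶜ.degree v = Dc at hturan hsum
  generalize ∑ v, G.degree v = D at hsum ⊢
  rcases (card V).eq_zero_or_pos with hn | hn
  · simp [hn]
  · zify [ha, hn] at hturan hsum ⊢
    nlinarith

section Digraph

variable [DecidableEq V] (r : V → V → Prop) [DecidableRel r]

theorem sum_degree_fromRel_le :
    ∑ v, (fromRel r).degree v ≤ 2 * ∑ v, #{u | r u v} := by
  have hdeg : ∀ v, (fromRel r).degree v ≤ #{u | r u v} + #{u | r v u} := fun v => by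
    rw [← card_neighborFinset_eq_degree, neighborFinset_eq_filter]
    refine (card_le_card fun u hu => ?_).trans (card_union_le _ _)
    simp only [mem_filter, mem_univ, true_and, fromRel_adj, mem_union] at hu ⊢
    tauto
  have hswap : ∑ v, #{u | r v u} = ∑ v, #{u | r u v} := by
    simp only [card_filter]
    exact sum_comm
  calc ∑ v, (fromRel r).degree v ≤ ∑ v, (#{u | r u v} + #{u | r v u}) :=
        sum_le_sum fun v _ => hdeg v
    _ = 2 * ∑ v, #{u | r u v} := by rw [sum_add_distrib, hswap, two_mul]

theorem sq_card_le_of_forall_isIndepSet_card_le {a : ℕ}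
    (h : ∀ s : Finset V, (fromRel r).IsIndepSet s → #s ≤ a) :
    card V ^ 2 ≤ a * (card V + 2 * ∑ v, #{u | r u v}) :=
  (sq_card_le_mul_card_add_sum_degree h).trans (by gcongr; exact sum_degree_fromRel_le r)

theorem card_le_mul_of_forall_indegree_le {a D : ℕ}
    (h : ∀ s : Finset V, (fromRel r).IsIndepSet s → #s ≤ a) (S : Finset V)
    (hS : ∀ v ∈ S, #{u | r u v} ≤ D) : #S ≤ a * (1 + 2 * D) := by
  have hS' : ∀ t : Finset S, (fromRel fun u v : S => r u v).IsIndepSet t → #t ≤ a := by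
    intro t ht
    rw [← card_map (Function.Embedding.subtype _)]
    refine h _ ?_
    rw [coe_map]
    rintro _ ⟨x, hx, rfl⟩ _ ⟨y, hy, rfl⟩ hne hadj
    have hne' : x ≠ y := ne_of_apply_ne _ hne
    exact ht hx hy hne' ((fromRel_adj _ _ _).mpr ⟨hne', ((fromRel_adj _ _ _).mp hadj).2⟩)
  have hdeg : ∀ v : S, #{u : S | r u v} ≤ D := fun v =>
    (card_le_card_of_injOn Subtype.val (fun u hu => by simpa using hu)
      Subtype.val_injective.injOn).trans (hS v v.2)
  have := sq_card_le_of_forall_isIndepSet_card_le (fun u v : S => r u v) hS'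
  rw [card_coe] at this
  have hsum : ∑ v : S, #{u : S | r u v} ≤ #S * D :=
    calc _ ≤ ∑ _v : S, D := sum_le_sum fun v _ => hdeg v
      _ = #S * D := by simp
  rcases (#S).eq_zero_or_pos with h0 | hpos
  · simp [h0]
  refine Nat.le_of_mul_le_mul_left ?_ hpos
  calc #S * #S = #S ^ 2 := (sq _).symm
    _ ≤ a * (#S + 2 * (#S * D)) := this.trans (by gcongr)
    _ = #S * (a * (1 + 2 * D)) := by ring

end Digraph

end SimpleGraph

open SimpleGraph

theorem Real.sum_range_one_div_add_le_log {a : ℝ} (ha : 0 < a) (n : ℕ) :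
    ∑ i ∈ range n, 1 / (a + (i + 1 : ℕ)) ≤ Real.log (1 + n / a) := by
  have hanti : AntitoneOn (fun x : ℝ => 1 / x) (Set.Icc a (a + n)) :=
    fun x hx _ _ hxy => one_div_le_one_div_of_le (ha.trans_le hx.1) hxy
  calc ∑ i ∈ range n, 1 / (a + (i + 1 : ℕ)) ≤ ∫ x in a..a + n, 1 / x :=
        hanti.sum_le_integral
    _ = Real.log (1 + n / a) := by
      rw [integral_one_div_of_pos ha (by positivity), add_div, div_self ha.ne']

section IndegreeSort

variable {N : ℕ} {adj : Fin N → Fin N → Prop}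

theorem card_le_indepNumD {s : Finset (Fin N)} (hs : (fromRel adj).IsIndepSet s) :
    #s ≤ indepNumD N adj := by
  classical
  exact le_sup (mem_filter.mpr ⟨mem_powerset.mpr (subset_univ s), fun i hi j hj hne => by
    simpa [not_or, hne] using hs hi hj hne⟩)

theorem one_le_indepNumD (hN : 1 ≤ N) : 1 ≤ indepNumD N adj := by
  simpa using card_le_indepNumD (adj := adj) (s := {⟨0, hN⟩}) (by simp)

theorem succ_le_indepNumD_mul_indegree_sort (j : Fin N) :
    (j : ℕ) + 1 ≤
      indepNumD N adj * (1 + 2 * indegree N adj (Tuple.sort (indegree N adj) j)) := by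
  classical
  set σ := Tuple.sort (indegree N adj)
  have := card_le_mul_of_forall_indegree_le adj (D := indegree N adj (σ j))
    (fun s hs => card_le_indepNumD hs) ((Finset.Iic j).map σ.toEmbedding) fun v hv => by
      obtain ⟨i, hi, rfl⟩ := mem_map.mp hv
      exact Tuple.monotone_sort (indegree N adj) (mem_Iic.mp hi)
  simpa using this

theorem one_div_one_add_indegree_sort_le (j : Fin N) :
    1 / (1 + (indegree N adj (Tuple.sort (indegree N adj) j) : ℝ)) ≤
      2 * indepNumD N adj / (indepNumD N adj + (j + 1 : ℕ)) := by
  rw [div_le_div_iff₀ (by positivity) (by positivity)]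
  have : ((j + 1 : ℕ) : ℝ) ≤
      indepNumD N adj * (1 + 2 * indegree N adj (Tuple.sort (indegree N adj) j)) := by
    exact_mod_cast succ_le_indepNumD_mul_indegree_sort j
  linarith

end IndegreeSort

theorem stmt_12 (N : ℕ) (hN : 1 ≤ N) (adj : Fin N → Fin N → Prop) :
    ∑ i, (1 : ℝ) / (1 + indegree N adj i) ≤
      2 * (indepNumD N adj : ℝ) *
        Real.log (1 + (N : ℝ) / (indepNumD N adj : ℝ)) := by
  set α : ℝ := (indepNumD N adj : ℝ)
  have hα : 0 < α := by unfold α; exact_mod_cast one_le_indepNumD hN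
  set σ := Tuple.sort (indegree N adj)
  calc ∑ i, (1 : ℝ) / (1 + indegree N adj i)
      = ∑ j, (1 : ℝ) / (1 + indegree N adj (σ j)) := (Equiv.sum_comp σ _).symm
    _ ≤ ∑ j : Fin N, 2 * α / (α + (j + 1 : ℕ)) :=
      sum_le_sum fun j _ => one_div_one_add_indegree_sort_le j
    _ = 2 * α * ∑ i ∈ range N, 1 / (α + (i + 1 : ℕ)) := by
      rw [mul_sum, ← Fin.sum_univ_eq_sum_range]
      simp only [mul_one_div]
    _ ≤ 2 * α * Real.log (1 + N / α) := by
      gcongr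
      exact Real.sum_range_one_div_add_le_log hα N
end

section
/- Let η_{t+1} ≤ η_t be positive reals and L_1,…,L_N ≥ 0. Define W = (1/N)Σ_i exp(-η_{t+1} L_i) and W' = (1/N)Σ_i exp(-η_t L_i). Then W ≤ (W')^{η_{t+1}/η_t}, and consequently (log W)/η_{t+1} ≤ (log W')/η_t. -/
theorem stmt_13 (N : ℕ) (hN : 0 < N) (η₁ η₂ : ℝ) (hη₂ : 0 < η₂) (hle : η₂ ≤ η₁)
    (L : Fin N → ℝ) (hL : ∀ i, 0 ≤ L i) :
    (1 / N) * ∑ i, Real.exp (-η₂ * L i) ≤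
      ((1 / N) * ∑ i, Real.exp (-η₁ * L i)) ^ (η₂ / η₁) ∧
    Real.log ((1 / N) * ∑ i, Real.exp (-η₂ * L i)) / η₂ ≤
      Real.log ((1 / N) * ∑ i, Real.exp (-η₁ * L i)) / η₁ := by
  have hη₁ : (0:ℝ) < η₁ := lt_of_lt_of_le hη₂ hle
  have hNpos : (0:ℝ) < (N:ℝ) := by exact_mod_cast hN
  have hp₀ : (0:ℝ) ≤ η₂ / η₁ := by positivity
  have hp₁ : η₂ / η₁ ≤ 1 := by
    rw [div_le_one hη₁]; exact hle
  have hW' : 0 < (1 / (N:ℝ)) * ∑ i, Real.exp (-η₁ * L i) := by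
    apply mul_pos (by positivity)
    apply Finset.sum_pos (fun i _ => Real.exp_pos _)
    exact Finset.univ_nonempty_iff.mpr (Fin.pos_iff_nonempty.mp hN)
  have hW : 0 < (1 / (N:ℝ)) * ∑ i, Real.exp (-η₂ * L i) := by
    apply mul_pos (by positivity)
    apply Finset.sum_pos (fun i _ => Real.exp_pos _)
    exact Finset.univ_nonempty_iff.mpr (Fin.pos_iff_nonempty.mp hN)
  have h1 : (1 / (N:ℝ)) * ∑ i, Real.exp (-η₂ * L i) ≤
      ((1 / (N:ℝ)) * ∑ i, Real.exp (-η₁ * L i)) ^ (η₂ / η₁) := by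
    have := (Real.concaveOn_rpow hp₀ hp₁).le_map_sum
      (t := Finset.univ) (w := fun _ : Fin N => 1 / (N:ℝ))
      (p := fun i => Real.exp (-η₁ * L i))
      (fun i _ => by positivity)
      (by simp [Finset.sum_const, Finset.card_univ, mul_comm]
          field_simp)
      (fun i _ => Set.mem_Ici.mpr (Real.exp_pos _).le)
    simp only [smul_eq_mul] at this
    calc (1 / (N:ℝ)) * ∑ i, Real.exp (-η₂ * L i)
        = ∑ i, (1 / (N:ℝ)) * Real.exp (-η₁ * L i) ^ (η₂ / η₁) := by
          rw [Finset.mul_sum]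
          congr 1; funext i
          rw [← Real.exp_mul]
          congr 1; field_simp
      _ ≤ ((∑ i, (1 / (N:ℝ)) * Real.exp (-η₁ * L i))) ^ (η₂ / η₁) := this
      _ = ((1 / (N:ℝ)) * ∑ i, Real.exp (-η₁ * L i)) ^ (η₂ / η₁) := by
          rw [Finset.mul_sum]
  refine ⟨h1, ?_⟩
  have h2 := Real.log_le_log hW h1
  rw [Real.log_rpow hW'] at h2
  rw [div_le_div_iff₀ hη₂ hη₁]
  calc Real.log ((1 / (N:ℝ)) * ∑ i, Real.exp (-η₂ * L i)) * η₁
      ≤ (η₂ / η₁ * Real.log ((1 / (N:ℝ)) * ∑ i, Real.exp (-η₁ * L i))) * η₁ :=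
        mul_le_mul_of_nonneg_right h2 hη₁.le
    _ = Real.log ((1 / (N:ℝ)) * ∑ i, Real.exp (-η₁ * L i)) * η₂ := by
        field_simp
end

section
/- Let (p_i) be a probability vector and ℓ̂_i real numbers with η·ℓ̂_i ≥ -1 for all i, where η > 0. Then (1/η)·log(Σ_i p_i exp(-η ℓ̂_i)) ≤ -Σ_i p_i ℓ̂_i + η·Σ_i p_i ℓ̂_i². -/
lemma exp_neg_le_quad {x : ℝ} (hx : -1 ≤ x) : Real.exp (-x) ≤ 1 - x + x ^ 2 := by
  rcases le_or_gt x 1 with h1 | h1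
  · have habs : |(-x)| ≤ 1 := by rw [abs_le]; constructor <;> linarith
    have := Real.abs_exp_sub_one_sub_id_le habs
    rw [abs_le] at this
    nlinarith [this.2]
  · have h2 : (0:ℝ) < 1 + x := by linarith
    have h3 : 1 + x ≤ Real.exp x := by linarith [Real.add_one_le_exp x]
    have h4 : Real.exp (-x) * Real.exp x = 1 := by
      rw [← Real.exp_add]; simp
    nlinarith [mul_nonneg (Real.exp_pos (-x)).le (by linarith : (0:ℝ) ≤ Real.exp x - (1+x)),
      Real.exp_pos (-x), sq_nonneg x]

theorem stmt_14 (N : ℕ) (p : Fin N → ℝ) (ℓ : Fin N → ℝ) (η : ℝ) (hη : 0 < η)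
    (hp : ∀ i, 0 ≤ p i) (hpsum : ∑ i, p i = 1)
    (hℓ : ∀ i, -1 ≤ η * ℓ i) :
    (1 / η) * Real.log (∑ i, p i * Real.exp (-η * ℓ i)) ≤
      -∑ i, p i * ℓ i + η * ∑ i, p i * (ℓ i) ^ 2 := by
  set S := ∑ i, p i * Real.exp (-η * ℓ i) with hS
  have hSpos : 0 < S := by
    rcases Finset.exists_lt_of_sum_lt (f := fun _ : Fin N => (0:ℝ)) (g := p)
      (by rw [hpsum]; simp) with ⟨i, hi⟩
    exact Finset.sum_pos' (fun j _ => mul_nonneg (hp j) (Real.exp_pos _).le)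
      ⟨i, Finset.mem_univ i, mul_pos hi.2 (Real.exp_pos _)⟩
  have hbound : S ≤ 1 - η * ∑ i, p i * ℓ i + η ^ 2 * ∑ i, p i * (ℓ i) ^ 2 := by
    have h1 : S ≤ ∑ i, p i * (1 - η * ℓ i + (η * ℓ i) ^ 2) := by
      apply Finset.sum_le_sum
      intro i _
      have he : -η * ℓ i = -(η * ℓ i) := by ring
      rw [he]
      exact mul_le_mul_of_nonneg_left (exp_neg_le_quad (hℓ i)) (hp i)
    have h2 : ∑ i, p i * (1 - η * ℓ i + (η * ℓ i) ^ 2) =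
        (∑ i, p i) - η * ∑ i, p i * ℓ i + η ^ 2 * ∑ i, p i * (ℓ i) ^ 2 := by
      rw [Finset.mul_sum, Finset.mul_sum, ← Finset.sum_sub_distrib, ← Finset.sum_add_distrib]
      exact Finset.sum_congr rfl fun i _ => by ring
    rw [h2, hpsum] at h1
    exact h1
  have hlog : Real.log S ≤ S - 1 := Real.log_le_sub_one_of_pos hSpos
  have hfin : Real.log S ≤ η * (-∑ i, p i * ℓ i + η * ∑ i, p i * (ℓ i) ^ 2) := by nlinarith
  rw [div_mul_eq_mul_div, one_mul, div_le_iff₀ hη]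
  linarith [hfin]
end

section
/- Let c_1,…,c_T be nonnegative reals with c_t ≤ B for all t. Then Σ_{t=1}^T c_t/√(B + Σ_{s=1}^{t-1} c_s) ≤ 2√(B + Σ_{t=1}^T c_t). -/
open Finset in
lemma stmt_15_core_step (B c S : ℝ) (hc : 0 ≤ c) (hcB : c ≤ B) (hBS : B ≤ S) :
    c / Real.sqrt S + (2 * Real.sqrt S - B / Real.sqrt S) ≤
      2 * Real.sqrt (S + c) - B / Real.sqrt (S + c) := by
  rcases eq_or_lt_of_le (le_trans hc (hcB.trans hBS)) with h0 | hS
  · have hB : B = 0 := le_antisymm (h0 ▸ hBS) (hc.trans hcB)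
    have hc0 : c = 0 := le_antisymm (hB ▸ hcB) hc
    simp [← h0, hB, hc0]
  · set u := Real.sqrt S with hu
    set v := Real.sqrt (S + c) with hv
    have hupos : 0 < u := Real.sqrt_pos.2 hS
    have hvpos : 0 < v := Real.sqrt_pos.2 (by linarith)
    have hu2 : u ^ 2 = S := Real.sq_sqrt hS.le
    have hv2 : v ^ 2 = S + c := Real.sq_sqrt (by linarith)
    have huv : u ≤ v := Real.sqrt_le_sqrt (by linarith)
    have hkey : v * (v - u) ≤ c := by nlinarith [mul_nonneg hupos.le (sub_nonneg.2 huv)]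
    have h1 : c / u + (2 * u - B / u) = (c + 2 * u ^ 2 - B) / u := by
      field_simp; ring
    have h2 : 2 * v - B / v = (2 * v ^ 2 - B) / v := by field_simp
    rw [h1, h2, div_le_div_iff₀ hupos hvpos]
    nlinarith [mul_nonneg (sub_nonneg.2 huv) (sub_nonneg.2 hkey)]

open Finset in
lemma stmt_15_aux (B : ℝ) (hB : 0 ≤ B) (d : ℕ → ℝ) (hd : ∀ i, 0 ≤ d i)
    (hdB : ∀ i, d i ≤ B) (n : ℕ) :
    ∑ t ∈ range n, d t / Real.sqrt (B + ∑ s ∈ range t, d s) ≤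
      2 * Real.sqrt (B + ∑ t ∈ range n, d t) -
        B / Real.sqrt (B + ∑ t ∈ range n, d t) := by
  induction n with
  | zero =>
      simp [Real.div_sqrt]
      nlinarith [Real.sqrt_nonneg B, Real.sq_sqrt hB, Real.sqrt_le_sqrt hB]
  | succ n ih =>
      have hBS : B ≤ B + ∑ t ∈ range n, d t := by
        have : 0 ≤ ∑ t ∈ range n, d t := Finset.sum_nonneg fun i _ => hd i
        linarith
      rw [Finset.sum_range_succ, Finset.sum_range_succ (f := d)]
      calc (∑ t ∈ range n, d t / Real.sqrt (B + ∑ s ∈ range t, d s)) +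
            d n / Real.sqrt (B + ∑ s ∈ range n, d s)
          ≤ d n / Real.sqrt (B + ∑ s ∈ range n, d s) +
            (2 * Real.sqrt (B + ∑ t ∈ range n, d t) -
              B / Real.sqrt (B + ∑ t ∈ range n, d t)) := by linarith
        _ ≤ 2 * Real.sqrt ((B + ∑ t ∈ range n, d t) + d n) -
              B / Real.sqrt ((B + ∑ t ∈ range n, d t) + d n) :=
            stmt_15_core_step B (d n) _ (hd n) (hdB n) hBS
        _ = _ := by ring_nf

open Finset in
theorem stmt_15 (T : ℕ) (B : ℝ) (c : Fin T → ℝ)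
    (hc : ∀ t, 0 ≤ c t) (hcB : ∀ t, c t ≤ B) :
    ∑ t, c t / Real.sqrt (B + ∑ s ∈ univ.filter (· < t), c s) ≤
      2 * Real.sqrt (B + ∑ t, c t) := by
  rcases Nat.eq_zero_or_pos T with rfl | hT
  · simp [mul_nonneg (by norm_num : (0:ℝ) ≤ 2) (Real.sqrt_nonneg _)]
  · have hB : 0 ≤ B := le_trans (hc ⟨0, hT⟩) (hcB ⟨0, hT⟩)
    set d : ℕ → ℝ := fun i => if h : i < T then c ⟨i, h⟩ else 0 with hd_def
    have hd : ∀ i, 0 ≤ d i := by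
      intro i; by_cases h : i < T <;> simp [hd_def, h, hc]
    have hdB : ∀ i, d i ≤ B := by
      intro i; by_cases h : i < T <;> simp [hd_def, h, hcB, hB]
    have inner : ∀ t : Fin T,
        ∑ s ∈ univ.filter (· < t), c s = ∑ s ∈ Finset.range t.val, d s := by
      intro t
      refine Finset.sum_nbij' (fun s => (s : ℕ))
        (fun s => if h : s < T then ⟨s, h⟩ else t) ?_ ?_ ?_ ?_ ?_
      · intro a ha
        simp only [mem_filter, mem_univ, true_and] at ha
        exact mem_range.2 ha
      · intro a ha
        have haT : a < T := (mem_range.1 ha).trans_le t.isLt.le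
        rw [dif_pos haT]
        exact mem_filter.2 ⟨mem_univ _, mem_range.1 ha⟩
      · intro a _
        rw [dif_pos a.isLt]
      · intro a ha
        have haT : a < T := (mem_range.1 ha).trans_le t.isLt.le
        rw [dif_pos haT]
      · intro a _
        rw [hd_def]
        dsimp only
        rw [dif_pos a.isLt]
    have houter : ∀ f : Fin T → ℝ, ∑ t, f t = ∑ t ∈ Finset.range T, f ⟨t % T, Nat.mod_lt _ hT⟩ := by
      intro f
      rw [← Fin.sum_univ_eq_sum_range (fun t => f ⟨t % T, Nat.mod_lt _ hT⟩) T]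
      exact Finset.sum_congr rfl fun t _ => by congr 1; exact Fin.ext (Nat.mod_eq_of_lt t.isLt).symm
    have hsum : ∑ t, c t = ∑ t ∈ Finset.range T, d t := by
      rw [houter c]
      refine Finset.sum_congr rfl fun t ht => ?_
      have h : t < T := mem_range.1 ht
      simp [hd_def, h, Nat.mod_eq_of_lt h]
    calc ∑ t, c t / Real.sqrt (B + ∑ s ∈ univ.filter (· < t), c s)
        = ∑ t ∈ Finset.range T, d t / Real.sqrt (B + ∑ s ∈ Finset.range t, d s) := by
          rw [houter (fun t => c t / Real.sqrt (B + ∑ s ∈ univ.filter (· < t), c s))]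
          refine Finset.sum_congr rfl fun t ht => ?_
          have h : t < T := mem_range.1 ht
          rw [inner]
          simp [hd_def, h, Nat.mod_eq_of_lt h]
      _ ≤ 2 * Real.sqrt (B + ∑ t ∈ Finset.range T, d t) -
            B / Real.sqrt (B + ∑ t ∈ Finset.range T, d t) :=
          stmt_15_aux B hB d hd hdB T
      _ ≤ 2 * Real.sqrt (B + ∑ t ∈ Finset.range T, d t) := by
          have h1 : 0 ≤ ∑ t ∈ Finset.range T, d t := Finset.sum_nonneg fun i _ => hd i
          have : 0 ≤ B / Real.sqrt (B + ∑ t ∈ Finset.range T, d t) :=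
            div_nonneg hB (Real.sqrt_nonneg _)
          linarith
      _ = 2 * Real.sqrt (B + ∑ t, c t) := by rw [hsum]
end

section
/- Let G be a weighted directed graph on N nodes with weights s_{j,i} ∈ [0,1], s_{i,i} = 1, let (p_j) be a probability vector, γ > 0, and let α* be the effective independence number of G. Then Q = Σ_{i=1}^N p_i/(Σ_j p_j s_{j,i}² + γ) ≤ 2α*·(1 + log(1 + (N²/γ + N² + N)/α*)). -/
open Finset

open Classical in
/-- Independence number of the unweighted directed graph obtained from the
weighted graph `s` by keeping arcs with weight at least `ε`. -/
noncomputable def indepNum (N : ℕ) (s : Fin N → Fin N → ℝ) (ε : ℝ) : ℕ :=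
  (Finset.univ.powerset.filter
    (fun S : Finset (Fin N) =>
      ∀ i ∈ S, ∀ j ∈ S, i ≠ j → s i j < ε ∧ s j i < ε)).sup Finset.card

lemma indep_card_le (N : ℕ) (s : Fin N → Fin N → ℝ) (ε : ℝ) (S : Finset (Fin N))
    (hS : ∀ i ∈ S, ∀ j ∈ S, i ≠ j → s i j < ε ∧ s j i < ε) :
    S.card ≤ indepNum N s ε := by
  classical
  apply Finset.le_sup
  simp only [Finset.mem_filter, Finset.mem_powerset]
  exact ⟨Finset.subset_univ S, hS⟩

lemma indepNum_le (N : ℕ) (s : Fin N → Fin N → ℝ) (ε : ℝ) : indepNum N s ε ≤ N := by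
  classical
  apply Finset.sup_le
  intro S _
  simpa using Finset.card_le_univ S

lemma one_le_indepNum (N : ℕ) (hN : 0 < N) (s : Fin N → Fin N → ℝ) (ε : ℝ) :
    1 ≤ indepNum N s ε := by
  have := indep_card_le N s ε {⟨0, hN⟩} (by simp)
  simpa using this

lemma greedy_lemma (N : ℕ) (s : Fin N → Fin N → ℝ) (ε : ℝ)
    (hdiag : ∀ i, s i i = 1) (hε1 : ε ≤ 1) (m : Fin N → ℕ) (t : ℝ) :
    ∀ T : Finset (Fin N), (∀ i ∈ T, 1 ≤ m i) →
      (∀ i ∈ T, ∑ j ∈ univ.filter (fun j => ε ≤ s j i), (m j : ℝ) ≤ t) →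
      ∃ I : Finset (Fin N), I ⊆ T ∧
        (∀ i ∈ I, ∀ j ∈ I, i ≠ j → s i j < ε ∧ s j i < ε) ∧
        ∑ i ∈ T, (m i : ℝ) ≤ 2 * t * (I.card : ℝ) := by
  classical
  intro T
  induction T using Finset.strongInduction with
  | _ T ih =>
  intro hm hM
  rcases T.eq_empty_or_nonempty with rfl | hT
  · exact ⟨∅, by simp, by simp, by simp⟩
  -- find v with small out-weight inside T
  have key : ∃ v ∈ T, ∑ u ∈ T.filter (fun u => ε ≤ s v u), (m u : ℝ) ≤ t := by
    by_contra hcon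
    push_neg at hcon
    have hlt : t * ∑ v ∈ T, (m v : ℝ)
        < ∑ v ∈ T, (m v : ℝ) * ∑ u ∈ T.filter (fun u => ε ≤ s v u), (m u : ℝ) := by
      rw [Finset.mul_sum]
      refine Finset.sum_lt_sum_of_nonempty hT ?_
      intro v hv
      have h1 : (1 : ℝ) ≤ (m v : ℝ) := by exact_mod_cast hm v hv
      have h2 := hcon v hv
      nlinarith
    have heq : ∑ v ∈ T, (m v : ℝ) * ∑ u ∈ T.filter (fun u => ε ≤ s v u), (m u : ℝ)
        = ∑ u ∈ T, (m u : ℝ) * ∑ v ∈ T.filter (fun v => ε ≤ s v u), (m v : ℝ) := by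
      simp_rw [Finset.mul_sum, Finset.sum_filter]
      rw [Finset.sum_comm]
      refine Finset.sum_congr rfl fun u _ => Finset.sum_congr rfl fun v _ => ?_
      by_cases h : ε ≤ s v u <;> simp [h, mul_comm]
    have hub : ∑ u ∈ T, (m u : ℝ) * ∑ v ∈ T.filter (fun v => ε ≤ s v u), (m v : ℝ)
        ≤ t * ∑ u ∈ T, (m u : ℝ) := by
      rw [Finset.mul_sum]
      refine Finset.sum_le_sum ?_
      intro u hu
      have hsub : ∑ v ∈ T.filter (fun v => ε ≤ s v u), (m v : ℝ)
          ≤ ∑ v ∈ univ.filter (fun v => ε ≤ s v u), (m v : ℝ) :=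
        Finset.sum_le_sum_of_subset_of_nonneg
          (Finset.filter_subset_filter _ (Finset.subset_univ T))
          (fun i _ _ => by positivity)
      have h3 := hsub.trans (hM u hu)
      have hmu : (0:ℝ) ≤ (m u : ℝ) := by positivity
      calc (m u : ℝ) * ∑ v ∈ T.filter (fun v => ε ≤ s v u), (m v : ℝ)
          ≤ (m u : ℝ) * t := mul_le_mul_of_nonneg_left h3 hmu
        _ = t * (m u : ℝ) := mul_comm _ _
    linarith
  obtain ⟨v, hvT, hvOut⟩ := key
  set R := T.filter (fun u => ε ≤ s u v ∨ ε ≤ s v u) with hRdef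
  have hvR : v ∈ R := by
    simp only [hRdef, Finset.mem_filter]
    exact ⟨hvT, Or.inl (by rw [hdiag]; exact hε1)⟩
  have hRT : R ⊆ T := Finset.filter_subset _ _
  set T' := T \ R with hT'def
  have hss : T' ⊂ T := Finset.sdiff_ssubset hRT ⟨v, hvR⟩
  obtain ⟨I, hIsub, hIindep, hIsum⟩ := ih T' hss
      (fun i hi => hm i (Finset.mem_sdiff.mp hi).1)
      (fun i hi => hM i (Finset.mem_sdiff.mp hi).1)
  have hInotR : ∀ u ∈ I, s u v < ε ∧ s v u < ε := by
    intro u hu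
    have hu' := Finset.mem_sdiff.mp (hIsub hu)
    have : ¬(ε ≤ s u v ∨ ε ≤ s v u) := by
      intro hcon
      exact hu'.2 (Finset.mem_filter.mpr ⟨hu'.1, hcon⟩)
    push_neg at this
    exact ⟨this.1, this.2⟩
  have hvI : v ∉ I := fun h => (Finset.mem_sdiff.mp (hIsub h)).2 hvR
  refine ⟨insert v I, ?_, ?_, ?_⟩
  · exact Finset.insert_subset hvT (hIsub.trans Finset.sdiff_subset)
  · intro i hi j hj hij
    rcases Finset.mem_insert.mp hi with rfl | hiI
    · rcases Finset.mem_insert.mp hj with rfl | hjI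
      · exact absurd rfl hij
      · exact ⟨(hInotR j hjI).2, (hInotR j hjI).1⟩
    · rcases Finset.mem_insert.mp hj with rfl | hjI
      · exact ⟨(hInotR i hiI).1, (hInotR i hiI).2⟩
      · exact hIindep i hiI j hjI hij
  · -- sum bound
    have hsplit : ∑ i ∈ T \ R, (m i : ℝ) + ∑ i ∈ R, (m i : ℝ) = ∑ i ∈ T, (m i : ℝ) :=
      Finset.sum_sdiff hRT
    have hRsum : ∑ i ∈ R, (m i : ℝ) ≤ 2 * t := by
      have hunion : R = T.filter (fun u => ε ≤ s u v) ∪ T.filter (fun u => ε ≤ s v u) := by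
        rw [hRdef, Finset.filter_or]
      have h1 : ∑ i ∈ T.filter (fun u => ε ≤ s u v), (m i : ℝ) ≤ t := by
        refine le_trans (Finset.sum_le_sum_of_subset_of_nonneg
          (Finset.filter_subset_filter _ (Finset.subset_univ T))
          (fun i _ _ => by positivity)) (hM v hvT)
      have h2 : ∑ i ∈ T.filter (fun u => ε ≤ s v u), (m i : ℝ) ≤ t := hvOut
      have hsub2 : R ⊆ T.filter (fun u => ε ≤ s u v) ∪ T.filter (fun u => ε ≤ s v u) :=
        hunion.le
      have hle : ∑ i ∈ R, (m i : ℝ)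
          ≤ ∑ i ∈ T.filter (fun u => ε ≤ s u v), (m i : ℝ)
            + ∑ i ∈ T.filter (fun u => ε ≤ s v u), (m i : ℝ) := by
        calc ∑ i ∈ R, (m i : ℝ)
            ≤ ∑ i ∈ T.filter (fun u => ε ≤ s u v) ∪ T.filter (fun u => ε ≤ s v u), (m i : ℝ) :=
              Finset.sum_le_sum_of_subset_of_nonneg hsub2 (fun i _ _ => by positivity)
          _ ≤ _ := by
              rw [← Finset.sum_union_inter]
              have : (0:ℝ) ≤ ∑ i ∈ (T.filter (fun u => ε ≤ s u v)) ∩ (T.filter (fun u => ε ≤ s v u)), (m i : ℝ) :=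
                Finset.sum_nonneg (fun i _ => by positivity)
              linarith
      linarith
    have hcard : ((insert v I).card : ℝ) = (I.card : ℝ) + 1 := by
      rw [Finset.card_insert_of_notMem hvI]; push_cast; ring
    rw [hcard]
    have := hIsum
    nlinarith [this, hRsum, hsplit]

lemma claimC_step (D x mm term : ℝ) (hD : 1 ≤ D) (hx : 0 ≤ x) (hm : 1 ≤ mm)
    (h1 : term ≤ 1) (h2 : term * (x + mm) ≤ D * mm) :
    min x D + D * Real.log (max 1 (x / D)) + term ≤
      min (x + mm) D + D * Real.log (max 1 ((x + mm) / D)) := by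
  have hD0 : 0 < D := lt_of_lt_of_le one_pos hD
  have hxm : 0 < x + mm := by linarith
  rcases le_or_gt (x + mm) D with hA | hA
  · -- case A : x + mm ≤ D
    have hxD : x ≤ D := by linarith
    rw [min_eq_left hxD, min_eq_left hA,
      max_eq_left (by rw [div_le_one hD0]; exact hxD),
      max_eq_left (by rw [div_le_one hD0]; exact hA)]
    linarith
  · rcases le_or_gt D x with hB | hB
    · -- case B : D ≤ x
      have hx0 : 0 < x := lt_of_lt_of_le hD0 hB
      rw [min_eq_right hB, min_eq_right hA.le,
        max_eq_right (by rw [le_div_iff₀ hD0]; linarith),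
        max_eq_right (by rw [le_div_iff₀ hD0]; linarith)]
      have hlog : Real.log ((x + mm) / D) - Real.log (x / D) = Real.log ((x + mm) / x) := by
        rw [Real.log_div hxm.ne' hD0.ne', Real.log_div hx0.ne' hD0.ne',
          Real.log_div hxm.ne' hx0.ne']
        ring
      have hlb : mm / (x + mm) ≤ Real.log ((x + mm) / x) := by
        have h := Real.log_le_sub_one_of_pos (show 0 < x / (x + mm) by positivity)
        have hrw : Real.log ((x + mm) / x) = - Real.log (x / (x + mm)) := by
          rw [← Real.log_inv, inv_div]
        have hfr : x / (x + mm) + mm / (x + mm) = 1 := by field_simp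
        rw [hrw]; linarith
      have hterm : term ≤ D * mm / (x + mm) := (le_div_iff₀ hxm).mpr h2
      have hid : D * mm / (x + mm) = D * (mm / (x + mm)) := by ring
      have hmul : D * (mm / (x + mm)) ≤ D * Real.log ((x + mm) / x) :=
        mul_le_mul_of_nonneg_left hlb hD0.le
      nlinarith [hlog, hterm, hmul, hid]
    · -- case C : x < D < x + mm
      rw [min_eq_left hB.le, min_eq_right hA.le,
        max_eq_left (by rw [div_le_one hD0]; exact hB.le),
        max_eq_right (by rw [le_div_iff₀ hD0]; linarith)]
      have hlb : 1 - D / (x + mm) ≤ Real.log ((x + mm) / D) := by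
        have h := Real.log_le_sub_one_of_pos (show 0 < D / (x + mm) by positivity)
        have hrw : Real.log ((x + mm) / D) = - Real.log (D / (x + mm)) := by
          rw [← Real.log_inv, inv_div]
        rw [hrw]; linarith
      have h3 : D * ((x + mm) - D) ≤ D * Real.log ((x + mm) / D) * (x + mm) := by
        have h4 := mul_le_mul_of_nonneg_left hlb hD0.le
        have h5 : D * (1 - D / (x + mm)) * (x + mm) = D * ((x + mm) - D) := by
          field_simp
        calc D * ((x + mm) - D) = D * (1 - D / (x + mm)) * (x + mm) := h5.symm
          _ ≤ D * Real.log ((x + mm) / D) * (x + mm) :=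
              mul_le_mul_of_nonneg_right h4 hxm.le
      -- goal: x + D * log 1 + term ≤ D + D * log ((x+mm)/D)
      rw [Real.log_one, mul_zero, add_zero]
      have hprod : 0 ≤ (D - x) * ((x + mm) - D) :=
        mul_nonneg (by linarith) (by linarith)
      -- multiply goal by (x+mm) : (x + term)(x+mm) ≤ (D + D log)(x+mm)
      rw [show x + term = (x + term) by rfl]
      have hgoal : (x + term) * (x + mm) ≤ (D + D * Real.log ((x + mm) / D)) * (x + mm) := by
        nlinarith [h2, h3, hprod]
      exact le_of_mul_le_mul_right (by linarith [hgoal]) hxm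

lemma claimC (N : ℕ) (m Mv : Fin N → ℕ) (D : ℝ) (hD : 1 ≤ D)
    (V : Finset (Fin N))
    (hm : ∀ i ∈ V, 1 ≤ m i) (hmM : ∀ i ∈ V, m i ≤ Mv i)
    (HF : ∀ i ∈ V, ∀ S ⊆ V, (∀ j ∈ S, Mv j ≤ Mv i) →
      (∑ j ∈ S, (m j : ℝ)) ≤ D * (Mv i : ℝ)) :
    ∀ S ⊆ V, ∑ i ∈ S, (m i : ℝ) / (Mv i : ℝ) ≤
      min (∑ i ∈ S, (m i : ℝ)) D + D * Real.log (max 1 ((∑ i ∈ S, (m i : ℝ)) / D)) := by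
  classical
  have hD0 : (0:ℝ) < D := lt_of_lt_of_le one_pos hD
  intro S
  induction S using Finset.strongInduction with
  | _ S ih =>
  intro hSV
  rcases S.eq_empty_or_nonempty with rfl | hS
  · simp only [Finset.sum_empty]
    rw [min_eq_left hD0.le, zero_div, max_eq_left zero_le_one, Real.log_one]
    simp
  · obtain ⟨i0, hi0S, hmax⟩ := S.exists_max_image Mv hS
    have hi0V : i0 ∈ V := hSV hi0S
    set S' := S.erase i0 with hS'def
    have hss : S' ⊂ S := Finset.erase_ssubset hi0S
    have hS'V : S' ⊆ V := (Finset.erase_subset _ _).trans hSV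
    have IH := ih S' hss hS'V
    have hsum1 : ∑ i ∈ S, (m i : ℝ) / (Mv i : ℝ)
        = (m i0 : ℝ) / (Mv i0 : ℝ) + ∑ i ∈ S', (m i : ℝ) / (Mv i : ℝ) :=
      (Finset.add_sum_erase S _ hi0S).symm
    have hsum2 : ∑ i ∈ S, (m i : ℝ) = ∑ i ∈ S', (m i : ℝ) + (m i0 : ℝ) := by
      rw [hS'def, Finset.sum_erase_add]
      exact hi0S
    have hWF : ∑ j ∈ S, (m j : ℝ) ≤ D * (Mv i0 : ℝ) :=
      HF i0 hi0V S hSV (fun j hj => hmax j hj)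
    have hMv1 : 1 ≤ Mv i0 := le_trans (hm i0 hi0V) (hmM i0 hi0V)
    have hMvpos : (0:ℝ) < (Mv i0 : ℝ) := by exact_mod_cast Nat.lt_of_lt_of_le Nat.zero_lt_one hMv1
    have hm1 : (1:ℝ) ≤ (m i0 : ℝ) := by exact_mod_cast hm i0 hi0V
    have hterm1 : (m i0 : ℝ) / (Mv i0 : ℝ) ≤ 1 := by
      rw [div_le_one hMvpos]
      exact_mod_cast hmM i0 hi0V
    have hterm2 : ((m i0 : ℝ) / (Mv i0 : ℝ)) * (∑ i ∈ S', (m i : ℝ) + (m i0 : ℝ))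
        ≤ D * (m i0 : ℝ) := by
      rw [← hsum2, div_mul_eq_mul_div, div_le_iff₀ hMvpos]
      nlinarith [mul_le_mul_of_nonneg_left hWF (show (0:ℝ) ≤ (m i0 : ℝ) by positivity)]
    have hx0 : (0:ℝ) ≤ ∑ i ∈ S', (m i : ℝ) := Finset.sum_nonneg (fun i _ => by positivity)
    have step := claimC_step D (∑ i ∈ S', (m i : ℝ)) (m i0 : ℝ) ((m i0 : ℝ) / (Mv i0 : ℝ))
      hD hx0 hm1 hterm1 hterm2
    rw [hsum1, hsum2]
    linarith [IH, step]

set_option maxHeartbeats 1000000 in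
lemma main_eps (N : ℕ) (hN : 0 < N) (s : Fin N → Fin N → ℝ)
    (hs : ∀ j i, s j i ∈ Set.Icc (0 : ℝ) 1) (hdiag : ∀ i, s i i = 1)
    (p : Fin N → ℝ) (hp : ∀ j, 0 ≤ p j) (hpsum : ∑ j, p j = 1)
    (γ : ℝ) (hγ : 0 < γ) (ε : ℝ) (hε0 : 0 < ε) (hε1 : ε ≤ 1)
    (αstar : ℝ) (h1α : 1 ≤ αstar) (hαN : αstar ≤ (N : ℝ))
    (hαε : αstar ≤ (indepNum N s ε : ℝ) / ε ^ 2) :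
    ∑ i, p i / (∑ j, p j * (s j i) ^ 2 + γ) ≤
      2 * ((indepNum N s ε : ℝ) / ε ^ 2) *
        (1 + Real.log (1 + ((N : ℝ) ^ 2 / γ + (N : ℝ) ^ 2 + (N : ℝ)) / αstar)) := by
  classical
  have hNr : 1 ≤ (N : ℝ) := by exact_mod_cast hN
  have hNr0 : (0:ℝ) < (N : ℝ) := by linarith
  have hε2 : (0:ℝ) < ε ^ 2 := by positivity
  set α : ℕ := indepNum N s ε with hαdef
  have hα1 : (1:ℝ) ≤ (α : ℝ) := by exact_mod_cast one_le_indepNum N hN s ε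
  have hα0 : (0:ℝ) < (α : ℝ) := by linarith
  set β : ℝ := γ / (ε ^ 2 * (N : ℝ) ^ 2) with hβdef
  have hβ0 : (0:ℝ) < β := div_pos hγ (mul_pos hε2 (pow_pos hNr0 2))
  set m : Fin N → ℕ := fun i => ⌈p i / β⌉₊ with hm_def
  set Mv : Fin N → ℕ := fun i => ∑ j ∈ univ.filter (fun j => ε ≤ s j i), m j with hMv_def
  -- basic facts
  have hf1 : ∀ i, p i ≤ β * (m i : ℝ) := by
    intro i
    have h := Nat.le_ceil (p i / β)
    have : p i = β * (p i / β) := by field_simp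
    rw [this]
    exact mul_le_mul_of_nonneg_left h hβ0.le
  have hf2 : ∀ i, (m i : ℝ) ≤ p i / β + 1 := by
    intro i
    exact le_of_lt (Nat.ceil_lt_add_one (div_nonneg (hp i) hβ0.le))
  have hself : ∀ i, i ∈ univ.filter (fun j => ε ≤ s j i) := by
    intro i
    refine Finset.mem_filter.mpr ⟨Finset.mem_univ _, ?_⟩
    rw [hdiag]; exact hε1
  have hmM : ∀ i, m i ≤ Mv i := by
    intro i
    exact Finset.single_le_sum (f := fun j => m j) (fun _ _ => Nat.zero_le _) (hself i)
  -- denominator bound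
  have hden : ∀ i, ε ^ 2 * (β * (Mv i : ℝ)) ≤ ∑ j, p j * (s j i) ^ 2 + γ := by
    intro i
    have h1 : (β * (Mv i : ℝ)) ≤ (∑ j ∈ univ.filter (fun j => ε ≤ s j i), p j) + (N:ℝ) * β := by
      have he : (β * (Mv i : ℝ)) = ∑ j ∈ univ.filter (fun j => ε ≤ s j i), β * (m j : ℝ) := by
        rw [hMv_def]
        push_cast
        rw [Finset.mul_sum]
      rw [he]
      have hstep : ∑ j ∈ univ.filter (fun j => ε ≤ s j i), β * (m j : ℝ)
          ≤ ∑ j ∈ univ.filter (fun j => ε ≤ s j i), (p j + β) := by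
        refine Finset.sum_le_sum fun j _ => ?_
        have h2 := hf2 j
        have h3 := mul_le_mul_of_nonneg_left h2 hβ0.le
        have h4 : β * (p j / β + 1) = p j + β := by field_simp
        linarith
      have hcardf : ((univ.filter (fun j => ε ≤ s j i)).card : ℝ) ≤ (N : ℝ) := by
        have := Finset.card_filter_le (univ : Finset (Fin N)) (fun j => ε ≤ s j i)
        have h5 : (univ : Finset (Fin N)).card = N := by simp
        exact_mod_cast h5 ▸ this
      have hsplit : ∑ j ∈ univ.filter (fun j => ε ≤ s j i), (p j + β)
          = (∑ j ∈ univ.filter (fun j => ε ≤ s j i), p j)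
            + ((univ.filter (fun j => ε ≤ s j i)).card : ℝ) * β := by
        rw [Finset.sum_add_distrib, Finset.sum_const, nsmul_eq_mul]
      calc ∑ j ∈ univ.filter (fun j => ε ≤ s j i), β * (m j : ℝ)
          ≤ ∑ j ∈ univ.filter (fun j => ε ≤ s j i), (p j + β) := hstep
        _ = _ + ((univ.filter (fun j => ε ≤ s j i)).card : ℝ) * β := hsplit
        _ ≤ _ + (N:ℝ) * β := by nlinarith [hβ0, hcardf]
    have hPs : ε ^ 2 * (∑ j ∈ univ.filter (fun j => ε ≤ s j i), p j)
        ≤ ∑ j, p j * (s j i) ^ 2 := by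
      rw [Finset.mul_sum]
      calc ∑ j ∈ univ.filter (fun j => ε ≤ s j i), ε ^ 2 * p j
          ≤ ∑ j ∈ univ.filter (fun j => ε ≤ s j i), p j * (s j i) ^ 2 := by
            refine Finset.sum_le_sum fun j hj => ?_
            have hsj : ε ≤ s j i := (Finset.mem_filter.mp hj).2
            have hsq : ε ^ 2 ≤ (s j i) ^ 2 := by nlinarith [hε0]
            nlinarith [hp j]
        _ ≤ ∑ j, p j * (s j i) ^ 2 := by
            refine Finset.sum_le_sum_of_subset_of_nonneg (Finset.filter_subset _ _) ?_
            intro j _ _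
            have := hp j
            positivity
    have hNβ : ε ^ 2 * ((N:ℝ) * β) ≤ γ := by
      have he : ε ^ 2 * ((N:ℝ) * β) = γ / (N:ℝ) := by
        rw [hβdef]
        field_simp
      rw [he]
      exact div_le_self hγ.le hNr
    have h2 : ε ^ 2 * (β * (Mv i : ℝ)) ≤ ε ^ 2 * ((∑ j ∈ univ.filter (fun j => ε ≤ s j i), p j) + (N:ℝ) * β) :=
      mul_le_mul_of_nonneg_left h1 hε2.le
    have h3 : ε ^ 2 * ((∑ j ∈ univ.filter (fun j => ε ≤ s j i), p j) + (N:ℝ) * β)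
        = ε ^ 2 * (∑ j ∈ univ.filter (fun j => ε ≤ s j i), p j) + ε ^ 2 * ((N:ℝ) * β) := by ring
    linarith
  -- per-term bound
  have hf6 : ∀ i, p i / (∑ j, p j * (s j i) ^ 2 + γ)
      ≤ (m i : ℝ) / (ε ^ 2 * (Mv i : ℝ)) := by
    intro i
    by_cases hmi : m i = 0
    · have hp0 : p i = 0 := by
        have h := hf1 i
        rw [hmi] at h
        push_cast at h
        have := hp i
        linarith
      rw [hp0, hmi]
      push_cast
      rw [zero_div, zero_div]
    · have hm1 : 1 ≤ m i := Nat.one_le_iff_ne_zero.mpr hmi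
      have hMv1 : (1:ℝ) ≤ (Mv i : ℝ) := by exact_mod_cast le_trans hm1 (hmM i)
      have hdpos : (0:ℝ) < ε ^ 2 * (β * (Mv i : ℝ)) := by positivity
      have h := div_le_div₀ (show (0:ℝ) ≤ β * (m i : ℝ) by positivity) (hf1 i) hdpos (hden i)
      have he : (β * (m i : ℝ)) / (ε ^ 2 * (β * (Mv i : ℝ))) = (m i : ℝ) / (ε ^ 2 * (Mv i : ℝ)) := by
        rw [div_eq_div_iff (by positivity) (by positivity)]
        ring
      rw [he] at h
      exact h
  have hQ1 : ∑ i, p i / (∑ j, p j * (s j i) ^ 2 + γ) ≤ ∑ i, (m i : ℝ) / (ε ^ 2 * (Mv i : ℝ)) :=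
    Finset.sum_le_sum fun i _ => hf6 i
  have hQ2 : ∑ i, (m i : ℝ) / (ε ^ 2 * (Mv i : ℝ)) = (∑ i, (m i : ℝ) / (Mv i : ℝ)) / ε ^ 2 := by
    rw [Finset.sum_div]
    refine Finset.sum_congr rfl fun i _ => ?_
    rw [div_div, mul_comm]
  set V : Finset (Fin N) := univ.filter (fun i => 0 < m i) with hVdef
  have hQ3 : ∑ i ∈ V, (m i : ℝ) / (Mv i : ℝ) = ∑ i, (m i : ℝ) / (Mv i : ℝ) := by
    refine Finset.sum_subset (Finset.filter_subset _ _) ?_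
    intro x _ hx
    rw [hVdef] at hx
    simp only [Finset.mem_filter, Finset.mem_univ, true_and, not_lt, Nat.le_zero] at hx
    rw [hx]
    push_cast
    rw [zero_div]
  have hMt : ∑ i ∈ V, (m i : ℝ) = ∑ i, (m i : ℝ) := by
    refine Finset.sum_subset (Finset.filter_subset _ _) ?_
    intro x _ hx
    rw [hVdef] at hx
    simp only [Finset.mem_filter, Finset.mem_univ, true_and, not_lt, Nat.le_zero] at hx
    exact_mod_cast hx
  have hMtB : ∑ i, (m i : ℝ) ≤ ε ^ 2 * (N:ℝ) ^ 2 / γ + (N:ℝ) := by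
    calc ∑ i, (m i : ℝ) ≤ ∑ i, (p i / β + 1) := Finset.sum_le_sum fun i _ => hf2 i
      _ = (∑ i, p i) / β + (N:ℝ) := by
          rw [Finset.sum_add_distrib, Finset.sum_const, nsmul_eq_mul, ← Finset.sum_div]
          simp
      _ = 1 / β + (N:ℝ) := by rw [hpsum]
      _ = ε ^ 2 * (N:ℝ) ^ 2 / γ + (N:ℝ) := by
          rw [hβdef, one_div_div]
  -- HF hypothesis via greedy
  have HF : ∀ i ∈ V, ∀ S ⊆ V, (∀ j ∈ S, Mv j ≤ Mv i) →
      (∑ j ∈ S, (m j : ℝ)) ≤ (2 * (α:ℝ)) * (Mv i : ℝ) := by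
    intro i hi S hSV hmax
    obtain ⟨I, hIsub, hIind, hIsum⟩ := greedy_lemma N s ε hdiag hε1 m ((Mv i : ℕ) : ℝ) S
      (fun j hj => by
        have := hSV hj
        rw [hVdef] at this
        simp only [Finset.mem_filter, Finset.mem_univ, true_and] at this
        omega)
      (fun j hj => by
        have h1 : ∑ u ∈ univ.filter (fun u => ε ≤ s u j), ((m u : ℕ) : ℝ) = ((Mv j : ℕ) : ℝ) := by
          rw [hMv_def]
          push_cast
          rfl
        rw [h1]
        exact_mod_cast hmax j hj)
    have hI : (I.card : ℝ) ≤ (α : ℝ) := by exact_mod_cast indep_card_le N s ε I hIind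
    have hMvnn : (0:ℝ) ≤ ((Mv i : ℕ) : ℝ) := by positivity
    calc ∑ j ∈ S, (m j : ℝ) ≤ 2 * ((Mv i : ℕ) : ℝ) * (I.card : ℝ) := hIsum
      _ ≤ (2 * (α:ℝ)) * (Mv i : ℝ) := by nlinarith
  have hD1 : (1:ℝ) ≤ 2 * (α:ℝ) := by linarith
  have hCmain := claimC N m Mv (2 * (α:ℝ)) hD1 V
    (fun i hi => by
      rw [hVdef] at hi
      simp only [Finset.mem_filter, Finset.mem_univ, true_and] at hi
      omega)
    (fun i _ => hmM i) HF V (subset_refl V)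
  set C : ℝ := (N:ℝ) ^ 2 / γ + (N:ℝ) ^ 2 + (N:ℝ) with hCdef
  have hC0 : (0:ℝ) ≤ C := by positivity
  have hαstar0 : (0:ℝ) < αstar := lt_of_lt_of_le one_pos h1α
  have hCα : (0:ℝ) ≤ C / αstar := by positivity
  -- bound the log argument
  have hkey : (∑ i, (m i : ℝ)) / (2 * (α:ℝ)) ≤ C / αstar := by
    rcases le_or_gt (α:ℝ) (ε ^ 2 * (N:ℝ)) with hcase | hcase
    · -- ε² N ≥ α : Mt ≤ ε² C and C/αstar ≥ ε² C / α
      have hNN : (N:ℝ) ≤ ε ^ 2 * ((N:ℝ) ^ 2 + (N:ℝ)) := by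
        nlinarith [mul_nonneg (sub_nonneg.mpr hcase) (by linarith : (0:ℝ) ≤ (N:ℝ) + 1)]
      have hMtC : ∑ i, (m i : ℝ) ≤ ε ^ 2 * C := by
        have he : ε ^ 2 * C = ε ^ 2 * (N:ℝ) ^ 2 / γ + ε ^ 2 * ((N:ℝ) ^ 2 + (N:ℝ)) := by
          rw [hCdef]; ring
        rw [he]
        linarith [hMtB]
      have h1 : C / ((α:ℝ) / ε ^ 2) ≤ C / αstar :=
        div_le_div_of_nonneg_left hC0 hαstar0 hαε
      have h2 : C / ((α:ℝ) / ε ^ 2) = ε ^ 2 * C / (α:ℝ) := by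
        rw [div_div_eq_mul_div]
        ring
      have h3 : (∑ i, (m i : ℝ)) / (2 * (α:ℝ)) ≤ ε ^ 2 * C / (2 * (α:ℝ)) := by
        apply div_le_div_of_nonneg_right hMtC
        positivity
      have h4 : ε ^ 2 * C / (2 * (α:ℝ)) ≤ ε ^ 2 * C / (α:ℝ) := by
        apply div_le_div_of_nonneg_left (by positivity) hα0 (by linarith)
      linarith [h1, h2 ▸ h1]
    · -- ε² N < α
      have hMt' : ∑ i, (m i : ℝ) ≤ (α:ℝ) * ((N:ℝ) / γ + (N:ℝ)) := by
        have h1 : ε ^ 2 * (N:ℝ) ^ 2 ≤ (α:ℝ) * (N:ℝ) := by nlinarith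
        have h2 : (N:ℝ) ≤ (α:ℝ) * (N:ℝ) := by nlinarith
        have h3 : ε ^ 2 * (N:ℝ) ^ 2 / γ ≤ (α:ℝ) * (N:ℝ) / γ := by
          apply div_le_div_of_nonneg_right h1
          exact hγ.le
        have he : (α:ℝ) * ((N:ℝ) / γ + (N:ℝ)) = (α:ℝ) * (N:ℝ) / γ + (α:ℝ) * (N:ℝ) := by ring
        rw [he]
        linarith [hMtB]
      have hCN : (N:ℝ) / γ + (N:ℝ) ≤ C / αstar := by
        have h1 : C / (N:ℝ) ≤ C / αstar :=
          div_le_div_of_nonneg_left hC0 hαstar0 hαN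
        have h2 : C / (N:ℝ) = (N:ℝ) / γ + (N:ℝ) + 1 := by
          rw [hCdef]
          field_simp
        linarith
      rw [div_le_iff₀ (by positivity : (0:ℝ) < 2 * (α:ℝ))]
      have hnn : (0:ℝ) ≤ (N:ℝ) / γ + (N:ℝ) := by positivity
      nlinarith [hMt', hCN, hα0, hCα]
  have hkeyV : (∑ i ∈ V, (m i : ℝ)) / (2 * (α:ℝ)) ≤ C / αstar := by rw [hMt]; exact hkey
  have harg : max 1 ((∑ i ∈ V, (m i : ℝ)) / (2 * (α:ℝ))) ≤ 1 + C / αstar := by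
    apply max_le
    · linarith
    · linarith
  have hlog : Real.log (max 1 ((∑ i ∈ V, (m i : ℝ)) / (2 * (α:ℝ))))
      ≤ Real.log (1 + C / αstar) :=
    Real.log_le_log (lt_of_lt_of_le one_pos (le_max_left _ _)) harg
  have hmin : min (∑ i ∈ V, (m i : ℝ)) (2 * (α:ℝ)) ≤ 2 * (α:ℝ) := min_le_right _ _
  have hfinal1 : ∑ i ∈ V, (m i : ℝ) / (Mv i : ℝ)
      ≤ 2 * (α:ℝ) * (1 + Real.log (1 + C / αstar)) := by
    have hmul : 2 * (α:ℝ) * Real.log (max 1 ((∑ i ∈ V, (m i : ℝ)) / (2 * (α:ℝ))))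
        ≤ 2 * (α:ℝ) * Real.log (1 + C / αstar) :=
      mul_le_mul_of_nonneg_left hlog (by linarith)
    calc ∑ i ∈ V, (m i : ℝ) / (Mv i : ℝ) ≤ _ := hCmain
      _ ≤ 2 * (α:ℝ) + 2 * (α:ℝ) * Real.log (1 + C / αstar) := by linarith
      _ = 2 * (α:ℝ) * (1 + Real.log (1 + C / αstar)) := by ring
  calc ∑ i, p i / (∑ j, p j * (s j i) ^ 2 + γ)
      ≤ ∑ i, (m i : ℝ) / (ε ^ 2 * (Mv i : ℝ)) := hQ1
    _ = (∑ i, (m i : ℝ) / (Mv i : ℝ)) / ε ^ 2 := hQ2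
    _ = (∑ i ∈ V, (m i : ℝ) / (Mv i : ℝ)) / ε ^ 2 := by rw [hQ3]
    _ ≤ (2 * (α:ℝ) * (1 + Real.log (1 + C / αstar))) / ε ^ 2 := by
        apply div_le_div_of_nonneg_right hfinal1
        positivity
    _ = 2 * ((α:ℝ) / ε ^ 2) * (1 + Real.log (1 + C / αstar)) := by ring

theorem stmt_16 (N : ℕ) (s : Fin N → Fin N → ℝ)
    (hs : ∀ j i, s j i ∈ Set.Icc (0 : ℝ) 1) (hdiag : ∀ i, s i i = 1)
    (p : Fin N → ℝ) (hp : ∀ j, 0 ≤ p j) (hpsum : ∑ j, p j = 1)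
    (γ : ℝ) (hγ : 0 < γ) (αstar : ℝ)
    (hαstar : αstar =
      sInf {x : ℝ | ∃ ε ∈ Set.Ioc (0 : ℝ) 1, x = (indepNum N s ε : ℝ) / ε ^ 2}) :
    ∑ i, p i / (∑ j, p j * (s j i) ^ 2 + γ) ≤
      2 * αstar * (1 + Real.log (1 + ((N : ℝ) ^ 2 / γ + N ^ 2 + N) / αstar)) := by
  rcases Nat.eq_zero_or_pos N with rfl | hN
  · -- N = 0
    have hset : {x : ℝ | ∃ ε ∈ Set.Ioc (0:ℝ) 1, x = (indepNum 0 s ε : ℝ) / ε ^ 2} = {0} := by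
      ext x
      simp only [Set.mem_setOf_eq, Set.mem_singleton_iff]
      constructor
      · rintro ⟨ε, hε, rfl⟩
        have h0 : indepNum 0 s ε = 0 := Nat.le_zero.mp (indepNum_le 0 s ε)
        rw [h0]
        simp
      · rintro rfl
        refine ⟨1, ⟨zero_lt_one, le_rfl⟩, ?_⟩
        have h0 : indepNum 0 s 1 = 0 := Nat.le_zero.mp (indepNum_le 0 s 1)
        rw [h0]
        simp
    have hα0 : αstar = 0 := by rw [hαstar, hset, csInf_singleton]
    rw [hα0]
    simp
  · -- N ≥ 1
    set SS := {x : ℝ | ∃ ε ∈ Set.Ioc (0:ℝ) 1, x = (indepNum N s ε : ℝ) / ε ^ 2} with hSS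
    have hmem1 : (indepNum N s 1 : ℝ) / 1 ^ 2 ∈ SS := ⟨1, ⟨zero_lt_one, le_rfl⟩, rfl⟩
    have hSne : SS.Nonempty := ⟨_, hmem1⟩
    have hSbdd : BddBelow SS := by
      refine ⟨0, ?_⟩
      rintro x ⟨ε, hε, rfl⟩
      positivity
    have h1α : 1 ≤ αstar := by
      rw [hαstar]
      apply le_csInf hSne
      rintro x ⟨ε, hε, rfl⟩
      rw [le_div_iff₀ (pow_pos hε.1 2)]
      have hα1 : (1:ℝ) ≤ (indepNum N s ε : ℝ) := by
        exact_mod_cast one_le_indepNum N hN s ε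
      nlinarith [hε.1, hε.2]
    have hαN : αstar ≤ (N : ℝ) := by
      have h1 : αstar ≤ (indepNum N s 1 : ℝ) / 1 ^ 2 := hαstar ▸ csInf_le hSbdd hmem1
      have h2 : (indepNum N s 1 : ℝ) ≤ (N : ℝ) := by exact_mod_cast indepNum_le N s 1
      calc αstar ≤ (indepNum N s 1 : ℝ) / 1 ^ 2 := h1
        _ = (indepNum N s 1 : ℝ) := by norm_num
        _ ≤ (N : ℝ) := h2
    set C : ℝ := (N:ℝ) ^ 2 / γ + (N:ℝ) ^ 2 + (N:ℝ) with hC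
    have hαstar0 : (0:ℝ) < αstar := lt_of_lt_of_le one_pos h1α
    have hC0 : (0:ℝ) ≤ C := by positivity
    set L : ℝ := 1 + Real.log (1 + C / αstar) with hL
    have hL1 : 1 ≤ L := by
      have : (0:ℝ) ≤ Real.log (1 + C / αstar) := Real.log_nonneg (by nlinarith [div_nonneg hC0 hαstar0.le])
      rw [hL]; linarith
    have hL0 : (0:ℝ) < 2 * L := by linarith
    set Q : ℝ := ∑ i, p i / (∑ j, p j * (s j i) ^ 2 + γ) with hQ
    have hlow : ∀ x ∈ SS, Q / (2 * L) ≤ x := by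
      rintro x ⟨ε, hε, rfl⟩
      have hαε : αstar ≤ (indepNum N s ε : ℝ) / ε ^ 2 :=
        hαstar ▸ csInf_le hSbdd ⟨ε, hε, rfl⟩
      have hme := main_eps N hN s hs hdiag p hp hpsum γ hγ ε hε.1 hε.2 αstar h1α hαN hαε
      rw [div_le_iff₀ hL0]
      calc Q ≤ 2 * ((indepNum N s ε : ℝ) / ε ^ 2) * L := hme
        _ = (indepNum N s ε : ℝ) / ε ^ 2 * (2 * L) := by ring
    have hQα : Q / (2 * L) ≤ αstar := hαstar ▸ le_csInf hSne hlow
    have : Q ≤ αstar * (2 * L) := (div_le_iff₀ hL0).mp hQα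
    calc Q ≤ αstar * (2 * L) := this
      _ = 2 * αstar * L := by ring
end
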